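/- The spectral radius of the Fejér matrix 𝓕 = (1 − k/(n+1))_{0≤k≤n} in the Banach algebra 𝒮_2^L of Schur multipliers for lower triangular operators on ℓ² is at most 1; consequently, for every λ ∈ ℂ with Re λ > 0, the element (λ+1)𝟙_L − 𝓕 is invertible in 𝒮_2^L, with inverse the matrix ((n+1)/(k + λ(n+1)))_{0≤k≤n}. -/

import Mathlib

/-!
A function `h` that is `L`-Lipschitz on `[0, 1]` gives a bounded lower triangular Schur
multiplier `S n k = h (k / (n + 1))` of norm at most `‖h 0‖ + 4 L`. Telescoping `h` along the
dyadic block `[2^m, 2^(m+1))` of the column `k` writes `S n k` as `h 0` plus increments of `h`,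
each a row coefficient times the indicator of a set of columns. In a row `n` of dyadic level
`i = log₂ (n + 1)` the increments are `O(L 2^(-i))` per unit step, so the row sums of the
coefficients and, summing a geometric series over the levels, their column sums are both at most
`‖h 0‖ + 4 L`; Schur's test then gives `‖S ⊙ A‖ ≤ (‖h 0‖ + 4 L) ‖A‖`.

The Hadamard powers of the Fejér matrix come from `h t = (1 - t) ^ N`, which is `N`-Lipschitz, so
`‖𝓕_N‖ ≤ 1 + 4 N` and `‖𝓕_N‖ ^ (1 / N) → 1`. The inverse `((n + 1) / (k + λ (n + 1)))` comes from
`h t = (λ + t)⁻¹`, which is `(Re λ)⁻²`-Lipschitz on `t ≥ 0`.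
-/

open scoped BigOperators

/-- `MatBound p A C` : the matrix `A` (row index first), acting on finitely supported
sequences, is bounded on `ℓ^p` with norm at most `C`. -/
noncomputable def MatBound (p : ℝ) (A : ℕ → ℕ → ℂ) (C : ℝ) : Prop :=
  ∀ x : ℕ →₀ ℂ,
    Summable (fun n : ℕ => ‖∑ k ∈ x.support, A n k * x k‖ ^ p) ∧
    ∑' n : ℕ, ‖∑ k ∈ x.support, A n k * x k‖ ^ p ≤
      C ^ p * ∑ k ∈ x.support, ‖x k‖ ^ p

/-- The matrix `A` represents a bounded operator on `ℓ^p`. -/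
noncomputable def IsBoundedOn (p : ℝ) (A : ℕ → ℕ → ℂ) : Prop :=
  ∃ C : ℝ, 0 ≤ C ∧ MatBound p A C

/-- `S` is a Schur multiplier on `ℓ^p`. -/
noncomputable def IsSchurMult (p : ℝ) (S : ℕ → ℕ → ℂ) : Prop :=
  ∀ A : ℕ → ℕ → ℂ, IsBoundedOn p A → IsBoundedOn p (fun n k => S n k * A n k)

/-- A matrix is lower triangular if its entries vanish above the main diagonal. -/
def LowerTri (A : ℕ → ℕ → ℂ) : Prop := ∀ n k : ℕ, n < k → A n k = 0

/-- `S` is a Schur multiplier for lower triangular matrices on `ℓ^p`. -/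
noncomputable def IsSchurMultLT (p : ℝ) (S : ℕ → ℕ → ℂ) : Prop :=
  ∀ A : ℕ → ℕ → ℂ, LowerTri A → IsBoundedOn p A →
    IsBoundedOn p (fun n k => S n k * A n k)

/-- Schur multiplier norm for lower triangular operators on `ℓ²`: the least constant `C`
such that `‖S ⊙ A‖ ≤ C‖A‖` for all bounded lower triangular `A`. -/
noncomputable def schurNormLT (S : ℕ → ℕ → ℂ) : ℝ :=
  sInf {C : ℝ | 0 ≤ C ∧ ∀ (A : ℕ → ℕ → ℂ) (M : ℝ), 0 ≤ M → LowerTri A →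
    MatBound 2 A M → MatBound 2 (fun n k => S n k * A n k) (C * M)}

/-- `N`-th Hadamard power of the Fejér matrix. -/
noncomputable def fejerPow (N : ℕ) : ℕ → ℕ → ℂ := fun n k =>
  if k ≤ n then (((1 - (k : ℝ) / ((n : ℝ) + 1) : ℝ) : ℂ)) ^ N else 0

open scoped NNReal ENNReal
open Finset

lemma summable_and_tsum_le_iff {g : ℕ → ℝ} (hg : ∀ n, 0 ≤ g n) {B : ℝ} (hB : 0 ≤ B) :
    (Summable g ∧ ∑' n, g n ≤ B) ↔ ∑' n, ENNReal.ofReal (g n) ≤ ENNReal.ofReal B := by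
  refine ⟨fun ⟨hs, hle⟩ => ?_, fun h => ?_⟩
  · rw [← ENNReal.ofReal_tsum_of_nonneg hg hs]
    exact ENNReal.ofReal_le_ofReal hle
  · have hs : Summable g := by
      have := ENNReal.summable_toReal (h.trans_lt ENNReal.ofReal_lt_top).ne
      simpa [ENNReal.toReal_ofReal (hg _)] using this
    refine ⟨hs, ?_⟩
    rw [← ENNReal.ofReal_tsum_of_nonneg hg hs] at h
    exact (ENNReal.ofReal_le_ofReal_iff hB).mp h

lemma ENNReal.tsum_option {α : Type*} (f : Option α → ℝ≥0∞) :
    ∑' o, f o = f none + ∑' a, f (some a) := by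
  rw [← (Equiv.optionEquivSumPUnit.{0} α).symm.tsum_eq,
    ENNReal.summable.tsum_sum ENNReal.summable]
  simp [add_comm]

lemma sum_Ioc_sub_pred {G : Type*} [AddCommGroup G] (f : ℕ → G) {m k : ℕ} (hmk : m ≤ k) :
    ∑ j ∈ Ioc m k, (f j - f (j - 1)) = f k - f m := by
  rw [← Ico_add_one_add_one_eq_Ioc]
  simpa using sum_Ico_sub (fun i => f (i - 1)) (Nat.add_le_add_right hmk 1)

lemma nnnorm_sum_mul_sq_le {ι R : Type*} [SeminormedRing R] (s : Finset ι) (a y : ι → R)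
    (c : ι → ℝ≥0) (hac : ∀ p ∈ s, ‖a p‖₊ ≤ c p) :
    ‖∑ p ∈ s, a p * y p‖₊ ^ 2 ≤ (∑ p ∈ s, c p) * ∑ p ∈ s, c p * ‖y p‖₊ ^ 2 :=
  calc ‖∑ p ∈ s, a p * y p‖₊ ^ 2 ≤ (∑ p ∈ s, ‖a p‖₊ * ‖y p‖₊) ^ 2 := by
        gcongr
        exact (nnnorm_sum_le _ _).trans (sum_le_sum fun _ _ => nnnorm_mul_le _ _)
    _ ≤ _ := sum_sq_le_sum_mul_sum_of_sq_le_mul _ (fun _ _ => zero_le) (fun _ _ => zero_le)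
        fun p hp => by
          rw [mul_pow, ← mul_assoc, ← sq]
          gcongr
          exact hac p hp

lemma matBound_two_iff {A : ℕ → ℕ → ℂ} {M : ℝ} :
    MatBound 2 A M ↔ ∀ x : ℕ →₀ ℂ,
      ∑' n, (‖∑ k ∈ x.support, A n k * x k‖₊ : ℝ≥0∞) ^ 2 ≤
        ENNReal.ofReal (M ^ 2) * ∑ k ∈ x.support, (‖x k‖₊ : ℝ≥0∞) ^ 2 := by
  refine forall_congr' fun x => ?_
  simp only [Real.rpow_two]
  rw [summable_and_tsum_le_iff (fun _ => sq_nonneg _) (by positivity),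
    ENNReal.ofReal_mul (sq_nonneg M), ENNReal.ofReal_sum_of_nonneg (fun _ _ => sq_nonneg _)]
  simp only [ENNReal.ofReal_pow (norm_nonneg _), ofReal_norm, enorm_eq_nnnorm]

lemma MatBound.tsum_sum_le {A : ℕ → ℕ → ℂ} {M : ℝ} (hA : MatBound 2 A M) (s : Finset ℕ)
    (v : ℕ → ℂ) :
    ∑' n, (‖∑ k ∈ s, A n k * v k‖₊ : ℝ≥0∞) ^ 2 ≤
      ENNReal.ofReal (M ^ 2) * ∑ k ∈ s, (‖v k‖₊ : ℝ≥0∞) ^ 2 := by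
  classical
  let x : ℕ →₀ ℂ := Finsupp.onFinset s (fun k => if k ∈ s then v k else 0)
    (fun k hk => by by_contra h; simp [h] at hk)
  have hx : ∀ {β : Type} [AddCommMonoid β] (g : ℕ → ℂ → β), (∀ k, g k 0 = 0) →
      ∑ k ∈ x.support, g k (x k) = ∑ k ∈ s, g k (v k) := fun g hg => by
    refine (Finsupp.onFinset_sum _ hg).trans (sum_congr rfl fun k hk => ?_)
    simp [hk]
  have := matBound_two_iff.mp hA x
  rwa [hx (fun k z => (‖z‖₊ : ℝ≥0∞) ^ 2) (by simp),
    tsum_congr fun n => by rw [hx (fun k z => A n k * z) (by simp)]] at this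

lemma schurNormLT_nonneg (S : ℕ → ℕ → ℂ) : 0 ≤ schurNormLT S :=
  Real.sInf_nonneg fun _ hC => hC.1

lemma sum_mul_mul_eq_sum_indicator {ι : Type*} {S A : ℕ → ℕ → ℂ} (hA : LowerTri A)
    {F : Finset ι} {T : ι → Set ℕ} {a : ι → ℂ} {n : ℕ}
    (hS : ∀ k, k ≤ n → S n k = ∑ p ∈ F, (T p).indicator (fun _ => a p) k) (s : Finset ℕ)
    (x : ℕ → ℂ) :
    ∑ k ∈ s, S n k * A n k * x k = ∑ p ∈ F, a p * ∑ k ∈ s, A n k * (T p).indicator x k := by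
  simp only [mul_sum]
  rw [sum_comm]
  refine sum_congr rfl fun k _ => ?_
  rcases le_or_gt k n with hkn | hnk
  · rw [hS k hkn, sum_mul, sum_mul]
    refine sum_congr rfl fun p _ => ?_
    by_cases hk : k ∈ T p <;> simp [hk, mul_left_comm, mul_assoc]
  · simp [hA n k hnk]

-- Schur's test: Cauchy–Schwarz in each row against the weights `c`, then the bound for `A` on
-- each restriction `(T p).indicator x`, summed column by column.
theorem matBound_mul_of_factorization {ι : Type*} {S A : ℕ → ℕ → ℂ} {M : ℝ}
    (hA : LowerTri A) (hAM : MatBound 2 A M) (F : ℕ → Finset ι) (T : ι → Set ℕ)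
    (a : ι → ℕ → ℂ) (c : ι → ℝ≥0) (C : ℝ≥0)
    (hS : ∀ n k, k ≤ n → S n k = ∑ p ∈ F n, (T p).indicator (fun _ => a p n) k)
    (hac : ∀ n, ∀ p ∈ F n, ‖a p n‖₊ ≤ c p)
    (hrow : ∀ n, ∑ p ∈ F n, c p ≤ C)
    (hcol : ∀ k, ∑' p, (T p).indicator (fun _ => (c p : ℝ≥0∞)) k ≤ C) :
    MatBound 2 (fun n k => S n k * A n k) (C * M) := by
  rw [matBound_two_iff]
  intro x
  set y : ι → ℕ → ℂ := fun p n => ∑ k ∈ x.support, A n k * (T p).indicator x k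
  have hz : ∀ n, (‖∑ k ∈ x.support, S n k * A n k * x k‖₊ : ℝ≥0∞) ^ 2 ≤
      C * ∑ p ∈ F n, c p * (‖y p n‖₊ : ℝ≥0∞) ^ 2 := fun n => by
    rw [sum_mul_mul_eq_sum_indicator hA (hS n)]
    exact_mod_cast (nnnorm_sum_mul_sq_le _ _ _ _ (hac n)).trans (by gcongr; exact hrow n)
  have hy : ∀ p, ∑' n, (‖y p n‖₊ : ℝ≥0∞) ^ 2 ≤ ENNReal.ofReal (M ^ 2) *
      ∑ k ∈ x.support, (T p).indicator (fun k => (‖x k‖₊ : ℝ≥0∞) ^ 2) k := fun p => by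
    refine (hAM.tsum_sum_le x.support ((T p).indicator x)).trans_eq ?_
    congr 1
    refine sum_congr rfl fun k _ => ?_
    by_cases hk : k ∈ T p <;> simp [hk]
  calc ∑' n, (‖∑ k ∈ x.support, S n k * A n k * x k‖₊ : ℝ≥0∞) ^ 2
      ≤ ∑' n, C * ∑ p ∈ F n, c p * (‖y p n‖₊ : ℝ≥0∞) ^ 2 := ENNReal.tsum_le_tsum hz
    _ ≤ C * ∑' n, ∑' p, c p * (‖y p n‖₊ : ℝ≥0∞) ^ 2 := by
        rw [ENNReal.tsum_mul_left]
        gcongr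
        exact ENNReal.sum_le_tsum _
    _ = C * ∑' p, c p * ∑' n, (‖y p n‖₊ : ℝ≥0∞) ^ 2 := by
        rw [ENNReal.tsum_comm]
        simp only [ENNReal.tsum_mul_left]
    _ ≤ C * ∑' p, c p * (ENNReal.ofReal (M ^ 2) *
          ∑ k ∈ x.support, (T p).indicator (fun k => (‖x k‖₊ : ℝ≥0∞) ^ 2) k) := by
        gcongr with p
        exact hy p
    _ = C * ENNReal.ofReal (M ^ 2) * ∑ k ∈ x.support,
          (∑' p, (T p).indicator (fun _ => (c p : ℝ≥0∞)) k) * (‖x k‖₊ : ℝ≥0∞) ^ 2 := by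
        simp only [mul_sum, mul_assoc]
        rw [Summable.tsum_finsetSum (β := ι) fun _ _ => ENNReal.summable, mul_sum]
        refine sum_congr rfl fun k _ => ?_
        congr 1
        rw [← ENNReal.tsum_mul_right, ← ENNReal.tsum_mul_left]
        refine tsum_congr fun p => ?_
        by_cases hk : k ∈ T p <;> simp [hk, mul_left_comm]
    _ ≤ C * ENNReal.ofReal (M ^ 2) * ∑ k ∈ x.support, C * (‖x k‖₊ : ℝ≥0∞) ^ 2 := by
        gcongr with k
        exact hcol k
    _ = ENNReal.ofReal ((C * M) ^ 2) * ∑ k ∈ x.support, (‖x k‖₊ : ℝ≥0∞) ^ 2 := by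
        rw [← mul_sum, mul_pow, ENNReal.ofReal_mul (by positivity)]
        simp only [ENNReal.ofReal_pow C.coe_nonneg, ENNReal.ofReal_coe_nnreal]
        ring

local notation "lg" => Nat.log 2

def dyadicSegment (k : ℕ) : Finset ℕ := Icc (2 ^ lg k) k

def dyadicPred (j : ℕ) : ℕ := if j = 2 ^ lg j then 0 else j - 1

lemma dyadicPred_le (j : ℕ) : dyadicPred j ≤ j := by
  unfold dyadicPred
  split_ifs <;> omega

lemma log_eq_of_mem_dyadicSegment {j k : ℕ} (hj : j ∈ dyadicSegment k) : lg j = lg k := by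
  rw [dyadicSegment, mem_Icc] at hj
  refine Nat.log_eq_of_pow_le_of_lt_pow hj.1 (hj.2.trans_lt ?_)
  exact Nat.lt_pow_succ_log_self one_lt_two k

lemma sum_dyadicSegment_sub {G : Type*} [AddCommGroup G] (f : ℕ → G) (k : ℕ) :
    ∑ j ∈ dyadicSegment k, (f j - f (dyadicPred j)) = f k - f 0 := by
  rcases eq_or_ne k 0 with rfl | hk
  · simp [dyadicSegment]
  have hbase : 2 ^ lg k ≤ k := Nat.pow_log_le_self 2 hk
  rw [dyadicSegment, Icc_eq_cons_Ioc hbase, sum_cons, dyadicPred,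
    if_pos (by rw [Nat.log_pow one_lt_two]), sum_congr rfl fun j hj => ?_,
    sum_Ioc_sub_pred f hbase]
  · abel
  · have hlog : lg j = lg k := log_eq_of_mem_dyadicSegment (Ioc_subset_Icc_self hj)
    rw [mem_Ioc] at hj
    rw [dyadicPred, hlog, if_neg (by omega)]

lemma sum_dyadicSegment_sub_dyadicPred (k : ℕ) :
    ∑ j ∈ dyadicSegment k, (j - dyadicPred j) = k := by
  apply Nat.cast_injective (R := ℤ)
  simpa [Nat.cast_sub (dyadicPred_le _)] using sum_dyadicSegment_sub (fun j : ℕ => (j : ℤ)) k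

lemma Ico_two_pow_eq_dyadicSegment (t : ℕ) :
    Ico (2 ^ t) (2 ^ (t + 1)) = dyadicSegment (2 ^ (t + 1) - 1) := by
  have hpos : 0 < 2 ^ t := Nat.two_pow_pos t
  have hlog : lg (2 ^ (t + 1) - 1) = t :=
    Nat.log_eq_of_pow_le_of_lt_pow (by rw [pow_succ]; omega) (by omega)
  ext j
  simp only [dyadicSegment, hlog, mem_Ico, mem_Icc]
  omega

lemma sum_Ico_one_two_pow_sub_dyadicPred_le (t : ℕ) :
    ∑ j ∈ Ico 1 (2 ^ t), (j - dyadicPred j) ≤ 2 ^ (t + 1) := by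
  induction t with
  | zero => simp
  | succ t ih =>
    rw [← sum_Ico_consecutive _ Nat.one_le_two_pow (Nat.pow_le_pow_right two_pos t.le_succ),
      Ico_two_pow_eq_dyadicSegment, sum_dyadicSegment_sub_dyadicPred, pow_succ 2 (t + 1)]
    omega

-- Index `none` carries the constant term `h 0`; index `some (s, j)` carries the increment of `h`
-- at column `j`, and is used only in the rows `n` with `lg (n + 1) = lg j + s`.
def dyadicRows (n : ℕ) : Finset (Option (ℕ × ℕ)) :=
  insert none ((Icc 1 n).image fun j => some (lg (n + 1) - lg j, j))

def dyadicCols : Option (ℕ × ℕ) → Set ℕ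
  | none => Set.univ
  | some (_, j) => {k | j ∈ dyadicSegment k}

noncomputable def dyadicCoeff (h : ℝ → ℂ) : Option (ℕ × ℕ) → ℕ → ℂ
  | none, _ => h 0
  | some (_, j), n => h (j / ((n : ℝ) + 1)) - h (dyadicPred j / ((n : ℝ) + 1))

noncomputable def dyadicWeight (c₀ L : ℝ≥0) : Option (ℕ × ℕ) → ℝ≥0
  | none => c₀
  | some (s, j) => L * (j - dyadicPred j : ℕ) * 2⁻¹ ^ (lg j + s)

lemma sum_dyadicRows_image {M : Type*} [AddCommMonoid M] (n : ℕ) (g : Option (ℕ × ℕ) → M) :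
    ∑ p ∈ dyadicRows n, g p = g none + ∑ j ∈ Icc 1 n, g (some (lg (n + 1) - lg j, j)) := by
  rw [dyadicRows, sum_insert (by simp), sum_image fun _ _ _ _ h => (by simpa using h : _ ∧ _).2]

lemma sum_dyadicRows_indicator_dyadicCoeff (h : ℝ → ℂ) {n k : ℕ} (hkn : k ≤ n) :
    ∑ p ∈ dyadicRows n, (dyadicCols p).indicator (fun _ => dyadicCoeff h p n) k =
      h (k / ((n : ℝ) + 1)) := by
  classical
  have hseg : Icc 1 n ∩ dyadicSegment k = dyadicSegment k :=
    inter_eq_right.mpr fun j hj => by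
      rw [dyadicSegment, mem_Icc] at hj
      exact mem_Icc.mpr ⟨Nat.one_le_two_pow.trans hj.1, hj.2.trans hkn⟩
  simp only [sum_dyadicRows_image, dyadicCols, dyadicCoeff, Set.indicator_apply, Set.mem_univ,
    if_true, Set.mem_ofPred_eq, sum_ite_mem, hseg]
  rw [sum_dyadicSegment_sub (fun j : ℕ => h (j / ((n : ℝ) + 1)))]
  simp

lemma inv_add_one_le_inv_two_pow_log (n : ℕ) : ((n : ℝ) + 1)⁻¹ ≤ 2⁻¹ ^ lg (n + 1) := by
  rw [inv_pow]
  gcongr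
  exact_mod_cast Nat.pow_log_le_self 2 n.succ_ne_zero

lemma nnnorm_dyadicCoeff_le {h : ℝ → ℂ} {L : ℝ≥0} (hh : LipschitzOnWith L h (Set.Icc 0 1))
    {n : ℕ} {p : Option (ℕ × ℕ)} (hp : p ∈ dyadicRows n) :
    ‖dyadicCoeff h p n‖₊ ≤ dyadicWeight ‖h 0‖₊ L p := by
  rw [dyadicRows, mem_insert, mem_image] at hp
  rcases hp with rfl | ⟨j, hj, rfl⟩
  · exact le_rfl
  rw [mem_Icc] at hj
  have hlog : lg j + (lg (n + 1) - lg j) = lg (n + 1) :=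
    Nat.add_sub_cancel' (Nat.log_mono_right (by omega))
  have hpred : (dyadicPred j : ℝ) ≤ j := by exact_mod_cast dyadicPred_le j
  have hjn : (j : ℝ) ≤ n + 1 := by exact_mod_cast (by omega : j ≤ n + 1)
  have hmem : ∀ {i : ℕ}, (i : ℝ) ≤ j → (i : ℝ) / (n + 1) ∈ Set.Icc (0 : ℝ) 1 := fun hi =>
    ⟨by positivity, div_le_one_of_le₀ (hi.trans hjn) (by positivity)⟩
  rw [← NNReal.coe_le_coe, coe_nnnorm]
  simp only [dyadicCoeff, dyadicWeight, hlog, NNReal.coe_mul, NNReal.coe_pow, NNReal.coe_inv,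
    NNReal.coe_natCast, NNReal.coe_ofNat, Nat.cast_sub (dyadicPred_le j)]
  calc ‖h (j / (n + 1)) - h (dyadicPred j / (n + 1))‖
      ≤ L * ‖(j : ℝ) / (n + 1) - dyadicPred j / (n + 1)‖ :=
        hh.norm_sub_le (hmem le_rfl) (hmem hpred)
    _ = L * (j - dyadicPred j) * ((n : ℝ) + 1)⁻¹ := by
        rw [← sub_div, Real.norm_eq_abs,
          abs_of_nonneg (div_nonneg (sub_nonneg.mpr hpred) (by positivity)), div_eq_mul_inv,
          mul_assoc]
    _ ≤ L * (j - dyadicPred j) * 2⁻¹ ^ lg (n + 1) := by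
        gcongr
        exact inv_add_one_le_inv_two_pow_log n

lemma sum_dyadicRows_dyadicWeight_le (c₀ L : ℝ≥0) (n : ℕ) :
    ∑ p ∈ dyadicRows n, dyadicWeight c₀ L p ≤ c₀ + 4 * L := by
  set i := lg (n + 1)
  have hsteps : ∑ j ∈ Icc 1 n, (j - dyadicPred j) ≤ 2 ^ (i + 2) := by
    refine (sum_le_sum_of_subset fun j hj => ?_).trans (sum_Ico_one_two_pow_sub_dyadicPred_le _)
    have : n + 1 < 2 ^ (i + 1) := Nat.lt_pow_succ_log_self one_lt_two (n + 1)
    rw [mem_Icc] at hj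
    exact mem_Ico.mpr ⟨hj.1, by omega⟩
  have hterm : ∀ j ∈ Icc 1 n, dyadicWeight c₀ L (some (i - lg j, j)) =
      L * 2⁻¹ ^ i * (j - dyadicPred j : ℕ) := fun j hj => by
    rw [dyadicWeight, Nat.add_sub_cancel' (Nat.log_mono_right (by rw [mem_Icc] at hj; omega))]
    ring
  rw [sum_dyadicRows_image, sum_congr rfl hterm, ← mul_sum, ← Nat.cast_sum]
  refine add_le_add le_rfl ?_
  calc L * 2⁻¹ ^ i * ((∑ j ∈ Icc 1 n, (j - dyadicPred j) : ℕ) : ℝ≥0)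
      ≤ L * 2⁻¹ ^ i * 2 ^ (i + 2) := by gcongr; exact_mod_cast hsteps
    _ = 4 * L := by
        rw [pow_add, ← mul_assoc, mul_assoc L, ← mul_pow, inv_mul_cancel₀ two_ne_zero]
        norm_num [mul_comm]

lemma tsum_indicator_dyadicWeight_le (c₀ L : ℝ≥0) (k : ℕ) :
    ∑' p, (dyadicCols p).indicator (fun _ => (dyadicWeight c₀ L p : ℝ≥0∞)) k ≤ c₀ + 4 * L := by
  set B : ℝ≥0 := L * 2⁻¹ ^ lg k * k
  have hcol : ∀ s, ∑' j, (dyadicCols (some (s, j))).indicator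
      (fun _ => (dyadicWeight c₀ L (some (s, j)) : ℝ≥0∞)) k = B * 2⁻¹ ^ s := fun s => by
    rw [tsum_eq_sum (s := dyadicSegment k) fun j hj =>
        Set.indicator_of_notMem (s := dyadicCols (some (s, j))) hj _,
      sum_congr rfl fun j hj => Set.indicator_of_mem (s := dyadicCols (some (s, j))) hj _,
      ← ENNReal.coe_inv_two, ← ENNReal.coe_pow, ← ENNReal.coe_mul, ← ENNReal.ofNNReal_finsetSum]
    congr 1
    simp only [dyadicWeight]
    rw [sum_congr rfl fun j hj => by rw [log_eq_of_mem_dyadicSegment hj], ← sum_mul, ← mul_sum,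
      ← Nat.cast_sum, sum_dyadicSegment_sub_dyadicPred, pow_add]
    ring
  have hB : B * 2 ≤ 4 * L := by
    have hk : (k : ℝ≥0) < 2 ^ (lg k + 1) := by
      exact_mod_cast Nat.lt_pow_succ_log_self one_lt_two k
    calc B * 2 = L * (2 * (2⁻¹ ^ lg k * k)) := by ring
      _ ≤ L * (2 * 2) := by
        gcongr
        rw [inv_pow, inv_mul_le_iff₀ (by positivity), ← pow_succ]
        exact hk.le
      _ = 4 * L := by ring
  rw [ENNReal.tsum_option, ENNReal.tsum_prod', tsum_congr hcol, ENNReal.tsum_mul_left,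
    ENNReal.tsum_geometric, ENNReal.one_sub_inv_two, inv_inv]
  simp only [dyadicCols, Set.indicator_univ, dyadicWeight]
  exact_mod_cast add_le_add le_rfl hB

theorem matBound_mul_of_lipschitzOnWith {h : ℝ → ℂ} {L : ℝ≥0}
    (hh : LipschitzOnWith L h (Set.Icc 0 1)) {S : ℕ → ℕ → ℂ}
    (hS : ∀ n k, k ≤ n → S n k = h (k / ((n : ℝ) + 1))) {A : ℕ → ℕ → ℂ} {M : ℝ}
    (hA : LowerTri A) (hAM : MatBound 2 A M) :
    MatBound 2 (fun n k => S n k * A n k) ((‖h 0‖₊ + 4 * L : ℝ≥0) * M) :=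
  matBound_mul_of_factorization hA hAM dyadicRows dyadicCols (dyadicCoeff h)
    (dyadicWeight ‖h 0‖₊ L) _
    (fun _ _ hkn => (hS _ _ hkn).trans (sum_dyadicRows_indicator_dyadicCoeff h hkn).symm)
    (fun _ _ hp => nnnorm_dyadicCoeff_le hh hp) (sum_dyadicRows_dyadicWeight_le _ _)
    fun k => by exact_mod_cast tsum_indicator_dyadicWeight_le _ _ k

lemma isSchurMultLT_of_lipschitzOnWith {h : ℝ → ℂ} {L : ℝ≥0}
    (hh : LipschitzOnWith L h (Set.Icc 0 1)) {S : ℕ → ℕ → ℂ}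
    (hS : ∀ n k, k ≤ n → S n k = h (k / ((n : ℝ) + 1))) : IsSchurMultLT 2 S :=
  fun _ hA ⟨_, hM, hAM⟩ => ⟨_, by positivity, matBound_mul_of_lipschitzOnWith hh hS hA hAM⟩

lemma schurNormLT_le_of_lipschitzOnWith {h : ℝ → ℂ} {L : ℝ≥0}
    (hh : LipschitzOnWith L h (Set.Icc 0 1)) {S : ℕ → ℕ → ℂ}
    (hS : ∀ n k, k ≤ n → S n k = h (k / ((n : ℝ) + 1))) : schurNormLT S ≤ ‖h 0‖ + 4 * L :=
  csInf_le ⟨0, fun _ hC => hC.1⟩ ⟨by positivity, fun _ _ _ hA hAM => by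
    simpa using matBound_mul_of_lipschitzOnWith hh hS hA hAM⟩

lemma lipschitzOnWith_one_sub_pow (N : ℕ) :
    LipschitzOnWith N (fun t : ℝ => ((1 - t : ℝ) : ℂ) ^ N) (Set.Icc 0 1) := by
  refine LipschitzOnWith.of_dist_le_mul fun u hu v hv => ?_
  have hmax : max |1 - u| |1 - v| ≤ 1 := by
    simp only [max_le_iff, abs_le]
    constructor <;> constructor <;> linarith [hu.1, hu.2, hv.1, hv.2]
  rw [Complex.dist_eq, ← Complex.ofReal_pow, ← Complex.ofReal_pow, ← Complex.ofReal_sub,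
    Complex.norm_real, Real.norm_eq_abs, Real.dist_eq, NNReal.coe_natCast]
  calc |(1 - u) ^ N - (1 - v) ^ N| ≤ |(1 - u) - (1 - v)| * N * max |1 - u| |1 - v| ^ (N - 1) :=
        abs_pow_sub_pow_le _ _ _
    _ ≤ |(1 - u) - (1 - v)| * N * 1 := by gcongr; exact pow_le_one₀ (by positivity) hmax
    _ = N * |u - v| := by rw [abs_sub_comm u v]; ring_nf

lemma schurNormLT_fejerPow_le (N : ℕ) : schurNormLT (fejerPow N) ≤ 1 + 4 * N := by
  simpa using schurNormLT_le_of_lipschitzOnWith (lipschitzOnWith_one_sub_pow N)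
    fun n k hkn => by simp [fejerPow, hkn]

open Filter Topology in
lemma limsup_rpow_inv_le_one {u : ℕ → ℝ} (hu : ∀ N, 0 ≤ u N) {a : ℝ} (ha : 0 < a)
    (hle : ∀ N, u N ≤ 1 + a * N) : limsup (fun N : ℕ => u N ^ (N : ℝ)⁻¹) atTop ≤ 1 := by
  have hlim : Tendsto (fun N : ℕ => (1 + a * N) ^ (N : ℝ)⁻¹) atTop (𝓝 1) := by
    have hx : Tendsto (fun N : ℕ => 1 + a * N) atTop atTop :=
      tendsto_atTop_add_const_left _ 1 (tendsto_natCast_atTop_atTop.const_mul_atTop ha)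
    refine ((tendsto_rpow_div_mul_add a 1 (-1) one_ne_zero.symm).comp hx).congr fun N => ?_
    simp only [Function.comp_apply]
    congr 1
    rcases eq_or_ne N 0 with rfl | hN
    · simp
    · field_simp
      ring
  have hmono : ∀ N : ℕ, u N ^ (N : ℝ)⁻¹ ≤ (1 + a * N) ^ (N : ℝ)⁻¹ := fun N => by
    gcongr
    exacts [hu N, hle N]
  calc limsup (fun N : ℕ => u N ^ (N : ℝ)⁻¹) atTop
      ≤ limsup (fun N : ℕ => (1 + a * N) ^ (N : ℝ)⁻¹) atTop :=
        limsup_le_limsup (.of_forall hmono)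
          (isCoboundedUnder_le_of_eventually_le _ (.of_forall fun N => Real.rpow_nonneg (hu N) _))
          hlim.isBoundedUnder_le
    _ = 1 := hlim.limsup_eq

lemma lipschitzOnWith_inv_add {lam : ℂ} (hlam : 0 < lam.re) :
    LipschitzOnWith (lam.re.toNNReal⁻¹ ^ 2) (fun t : ℝ => (lam + t)⁻¹) (Set.Ici 0) := by
  have hre : ∀ t : ℝ, 0 ≤ t → lam.re ≤ ‖lam + t‖ := fun t ht =>
    le_trans (by simpa using ht) (Complex.re_le_norm _)
  refine LipschitzOnWith.of_dist_le_mul fun u hu v hv => ?_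
  have hne : ∀ t : ℝ, 0 ≤ t → lam + t ≠ 0 := fun t ht h0 => by
    have := hre t ht
    rw [h0, norm_zero] at this
    linarith
  rw [dist_inv_inv₀ (hne u hu) (hne v hv), dist_add_left, Complex.isometry_ofReal.dist_eq,
    NNReal.coe_pow, NNReal.coe_inv, Real.coe_toNNReal _ hlam.le]
  calc dist u v / (‖lam + u‖ * ‖lam + v‖) ≤ dist u v / (lam.re * lam.re) := by
        gcongr
        exacts [hre u hu, hre v hv]
    _ = lam.re⁻¹ ^ 2 * dist u v := by ring

lemma natCast_add_mul_ne_zero {lam : ℂ} (hlam : 0 < lam.re) (n k : ℕ) :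
    (k : ℂ) + lam * ((n : ℂ) + 1) ≠ 0 := fun h => by
  have := congrArg Complex.re h
  simp only [Complex.add_re, Complex.mul_re, Complex.natCast_re, Complex.natCast_im,
    Complex.one_re, Complex.one_im, Complex.add_im, Complex.zero_re] at this
  nlinarith [(k.cast_nonneg : (0 : ℝ) ≤ k), (n.cast_nonneg : (0 : ℝ) ≤ n)]

/-- The spectral radius of the Fejér matrix `𝓕` in the Banach algebra `𝒮_2^L` is at most
`1` (via the spectral radius formula applied to Hadamard powers); consequently, for every
`λ` with `Re λ > 0`, `(λ+1)𝟙_L − 𝓕` is invertible in `𝒮_2^L`, with inverse the matrix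
`((n+1)/(k + λ(n+1)))_{0≤k≤n}`: this inverse is a Schur multiplier for lower triangular
operators and is the entrywise reciprocal of `(λ+1)𝟙_L − 𝓕` on the lower triangle. -/
theorem fejer_spectral_radius_and_inverse :
    (Filter.limsup (fun N : ℕ => schurNormLT (fejerPow N) ^ ((N : ℝ)⁻¹))
        Filter.atTop ≤ 1) ∧
    ∀ lam : ℂ, 0 < lam.re →
      IsSchurMultLT 2
        (fun n k => if k ≤ n then ((n : ℂ) + 1) / ((k : ℂ) + lam * ((n : ℂ) + 1)) else 0) ∧
      ∀ n k : ℕ, k ≤ n →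
        ((lam + 1) - (1 - (k : ℂ) / ((n : ℂ) + 1))) *
            (((n : ℂ) + 1) / ((k : ℂ) + lam * ((n : ℂ) + 1))) = 1 := by
  refine ⟨limsup_rpow_inv_le_one (fun N => schurNormLT_nonneg _) four_pos
    schurNormLT_fejerPow_le, fun lam hlam => ⟨?_, fun n k _ => ?_⟩⟩
  · refine isSchurMultLT_of_lipschitzOnWith
      ((lipschitzOnWith_inv_add hlam).mono Set.Icc_subset_Ici_self) fun n k hkn => ?_
    have hn : (n : ℂ) + 1 ≠ 0 := by exact_mod_cast n.succ_ne_zero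
    have := natCast_add_mul_ne_zero hlam n k
    rw [if_pos hkn]
    push_cast
    field_simp
    ring
  · have hn : (n : ℂ) + 1 ≠ 0 := by exact_mod_cast n.succ_ne_zero
    have := natCast_add_mul_ne_zero hlam n k
    field_simp
    ring
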